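/- arXiv:1503.05977 — 3 statements merged into one kernel-verified Lean document; each statement's English description precedes it below -/
import Mathlib

section
/- Let g ≥ 1 be an integer and consider a sequence of states x⁽⁰⁾, x⁽¹⁾, x⁽²⁾, … ∈ ℝ^g with x⁽⁰⁾ = 0 evolving as follows: at each step t there exist nonnegative reals a₁, …, a_g with a₁ + ⋯ + a_g = 1 and an index j that maximizes x⁽ᵗ⁾ᵢ + aᵢ over all i ∈ {1, …, g}, such that x⁽ᵗ⁺¹⁾_j = 0 and x⁽ᵗ⁺¹⁾ᵢ = x⁽ᵗ⁾ᵢ + aᵢ for every i ≠ j. Then at every time t and for every index i one has x⁽ᵗ⁾ᵢ ≤ 1 + h_{g−1}. -/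
/-!
Potential argument: we show by induction on time that for every `k`, any `k` coordinates sum to
at most `c k := k * (1 + H - h_k)`, where `H = h_{g-1}`. Adding increments of total mass `1`
raises a `(k+1)`-coordinate sum to at most `c (k+1) + 1`; if the new maximum lies among these
coordinates and is reset, at most a `k / (k+1)` fraction of that sum survives, and
`k * (c (k+1) + 1) = (k+1) * c k`. A sum containing the reset coordinate is a sum of `k - 1`
others, and `c` is nondecreasing up to `g`. For `k = 1` this gives `x ≤ c 1 = H`.
-/

open Finset

lemma harmonic_monotone : Monotone harmonic :=
  monotone_nat_of_le_succ fun n => by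
    rw [harmonic_succ]
    exact le_add_of_nonneg_right (by positivity)

lemma card_add_one_mul_sum_le_card_mul_sum_insert {ι : Type*} [DecidableEq ι] {T : Finset ι}
    {j : ι} (hjT : j ∉ T) (f : ι → ℝ) (hmax : ∀ i ∈ T, f i ≤ f j) :
    (#T + 1 : ℝ) * ∑ i ∈ T, f i ≤ #T * ∑ i ∈ insert j T, f i := by
  have hsum : ∑ i ∈ T, f i ≤ #T * f j := by
    simpa using sum_le_sum hmax
  rw [sum_insert hjT]
  linarith

section ResetProcess

variable {ι : Type*} [Fintype ι] [DecidableEq ι] {c : ℕ → ℝ}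

theorem sum_add_le_of_notMem (hc : ∀ k : ℕ, (k : ℝ) * (c (k + 1) + 1) ≤ (k + 1) * c k)
    {y a : ι → ℝ} {j : ι} (hy : ∀ S : Finset ι, ∑ i ∈ S, y i ≤ c #S)
    (ha : ∀ i, 0 ≤ a i) (hsum : ∑ i, a i = 1) (hj : ∀ i, y i + a i ≤ y j + a j)
    {T : Finset ι} (hjT : j ∉ T) : ∑ i ∈ T, (y i + a i) ≤ c #T := by
  have hins : ∑ i ∈ insert j T, (y i + a i) ≤ c (#T + 1) + 1 := by
    have hy' := hy (insert j T)
    have ha' : ∑ i ∈ insert j T, a i ≤ 1 :=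
      hsum ▸ sum_le_sum_of_subset_of_nonneg (subset_univ _) fun i _ _ => ha i
    rw [card_insert_of_notMem hjT] at hy'
    rw [sum_add_distrib]
    linarith
  have havg := card_add_one_mul_sum_le_card_mul_sum_insert hjT (y + a) fun i _ => hj i
  have hscaled := mul_le_mul_of_nonneg_left hins (Nat.cast_nonneg #T : (0 : ℝ) ≤ #T)
  refine le_of_mul_le_mul_left ?_ (by positivity : (0 : ℝ) < #T + 1)
  simp only [Pi.add_apply] at havg
  linarith [hc #T]

theorem sum_reset_le (hc : ∀ k : ℕ, (k : ℝ) * (c (k + 1) + 1) ≤ (k + 1) * c k)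
    (hmono : ∀ k < Fintype.card ι, c k ≤ c (k + 1))
    {y a z : ι → ℝ} {j : ι} (hy : ∀ S : Finset ι, ∑ i ∈ S, y i ≤ c #S)
    (ha : ∀ i, 0 ≤ a i) (hsum : ∑ i, a i = 1) (hj : ∀ i, y i + a i ≤ y j + a j)
    (hzj : z j = 0) (hz : ∀ i, i ≠ j → z i = y i + a i) (S : Finset ι) :
    ∑ i ∈ S, z i ≤ c #S := by
  by_cases hjS : j ∈ S
  · have hlt : #(S.erase j) < Fintype.card ι :=
      (card_erase_lt_of_mem hjS).trans_le (card_le_univ S)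
    calc ∑ i ∈ S, z i = ∑ i ∈ S.erase j, (y i + a i) := by
          rw [← add_sum_erase S _ hjS, hzj, zero_add]
          exact sum_congr rfl fun i hi => hz i (ne_of_mem_erase hi)
      _ ≤ c #(S.erase j) := sum_add_le_of_notMem hc hy ha hsum hj (notMem_erase j S)
      _ ≤ c #S := card_erase_add_one hjS ▸ hmono _ hlt
  · calc ∑ i ∈ S, z i = ∑ i ∈ S, (y i + a i) :=
          sum_congr rfl fun i hi => hz i (ne_of_mem_of_not_mem hi hjS)
      _ ≤ c #S := sum_add_le_of_notMem hc hy ha hsum hj hjS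

theorem sum_le_of_reset_process (hc : ∀ k : ℕ, (k : ℝ) * (c (k + 1) + 1) ≤ (k + 1) * c k)
    (hmono : ∀ k < Fintype.card ι, c k ≤ c (k + 1)) (hc0 : ∀ k ≤ Fintype.card ι, 0 ≤ c k)
    (x : ℕ → ι → ℝ) (h0 : ∀ i, x 0 i = 0)
    (hstep : ∀ t : ℕ, ∃ (a : ι → ℝ) (j : ι),
      (∀ i, 0 ≤ a i) ∧ (∑ i, a i) = 1 ∧
      (∀ i, x t i + a i ≤ x t j + a j) ∧
      x (t + 1) j = 0 ∧ (∀ i, i ≠ j → x (t + 1) i = x t i + a i))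
    (t : ℕ) (S : Finset ι) : ∑ i ∈ S, x t i ≤ c #S := by
  induction t generalizing S with
  | zero => simpa [h0] using hc0 _ (card_le_univ S)
  | succ t ih =>
    obtain ⟨a, j, ha, hsum, hj, hzj, hz⟩ := hstep t
    exact sum_reset_le hc hmono ih ha hsum hj hzj hz S

end ResetProcess

noncomputable def subsetSumBound (H : ℝ) (k : ℕ) : ℝ := k * (1 + H - harmonic k)

namespace subsetSumBound

variable {H : ℝ}

lemma one : subsetSumBound H 1 = H := by
  simp [subsetSumBound]

lemma succ (k : ℕ) : subsetSumBound H (k + 1) = subsetSumBound H k + (H - harmonic k) := by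
  simp only [subsetSumBound, harmonic_succ]
  push_cast
  field_simp
  ring

lemma natCast_mul_succ_add_one (k : ℕ) :
    (k : ℝ) * (subsetSumBound H (k + 1) + 1) = (k + 1) * subsetSumBound H k := by
  rw [succ, subsetSumBound]
  ring

lemma le_succ {k : ℕ} (hk : (harmonic k : ℝ) ≤ H) :
    subsetSumBound H k ≤ subsetSumBound H (k + 1) := by
  rw [succ]
  linarith

lemma nonneg {k : ℕ} (hk : ∀ m < k, (harmonic m : ℝ) ≤ H) : 0 ≤ subsetSumBound H k := by
  induction k with
  | zero => simp [subsetSumBound]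
  | succ k ih =>
    exact (ih fun m hm => hk m (hm.trans k.lt_succ_self)).trans (le_succ (hk k k.lt_succ_self))

end subsetSumBound

theorem dietz_sleator_general (g : ℕ) (x : ℕ → Fin g → ℝ)
    (h0 : ∀ i, x 0 i = 0)
    (hstep : ∀ t : ℕ, ∃ (a : Fin g → ℝ) (j : Fin g),
      (∀ i, 0 ≤ a i) ∧ (∑ i, a i) = 1 ∧
      (∀ i, x t i + a i ≤ x t j + a j) ∧
      x (t + 1) j = 0 ∧ (∀ i, i ≠ j → x (t + 1) i = x t i + a i)) :
    ∀ (t : ℕ) (i : Fin g), x t i ≤ 1 + (harmonic (g - 1) : ℝ) := by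
  intro t i
  have hH : ∀ k < Fintype.card (Fin g), (harmonic k : ℝ) ≤ harmonic (g - 1) := fun k hk => by
    rw [Fintype.card_fin] at hk
    exact_mod_cast harmonic_monotone (by omega)
  have hbound := sum_le_of_reset_process (fun k => (subsetSumBound.natCast_mul_succ_add_one k).le)
    (fun k hk => subsetSumBound.le_succ (hH k hk))
    (fun k hk => subsetSumBound.nonneg fun m hm => hH m (hm.trans_le hk)) x h0 hstep t {i}
  rw [sum_singleton, card_singleton, subsetSumBound.one] at hbound
  linarith

/-- Dietz–Sleator potential lemma: starting from the all-zero vector in ℝ^g,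
if at each step nonnegative increments summing to 1 are added to the coordinates
and then a coordinate achieving the maximum value is reset to 0, then every
coordinate stays at most `1 + h_{g-1}` at all times. -/
theorem dietz_sleator (g : ℕ) (hg : 1 ≤ g) (x : ℕ → Fin g → ℝ)
    (h0 : ∀ i, x 0 i = 0)
    (hstep : ∀ t : ℕ, ∃ (a : Fin g → ℝ) (j : Fin g),
      (∀ i, 0 ≤ a i) ∧ (∑ i, a i) = 1 ∧
      (∀ i, x t i + a i ≤ x t j + a j) ∧
      x (t + 1) j = 0 ∧ (∀ i, i ≠ j → x (t + 1) i = x t i + a i)) :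
    ∀ (t : ℕ) (i : Fin g), x t i ≤ 1 + (harmonic (g - 1) : ℝ) :=
  dietz_sleator_general g x h0 hstep
end

section
/- Let I and A be nonempty finite sets with |A| = σ. For each i ∈ I and a ∈ A, let f'_{a,i} and f_{a,i} be reals with 0 < f'_{a,i} ≤ f_{a,i}, and set n_i = Σ_{a∈A} f_{a,i} and n'_i = Σ_{a∈A} f'_{a,i}. Then Σ_{i∈I} Σ_{a∈A} f'_{a,i}·ln(n_i / f_{a,i}) ≤ Σ_{i∈I} n'_i·ln(n_i / n'_i) + (Σ_{i∈I} n'_i)·ln σ. -/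
/-! In each context `i`, Jensen's inequality for the concave `log` with weights
`f'_{a,i} / n'_i` bounds `∑_a f'_{a,i} ln(n_i / f_{a,i})` by
`n'_i ln(∑_a f'_{a,i} n_i / (n'_i f_{a,i}))`, and since `f'_{a,i} ≤ f_{a,i}` the inner sum
is at most `σ n_i / n'_i`. -/

open Finset Real

theorem sum_mul_log_le_mul_log_weightedMean {ι : Type*} (s : Finset ι) {w x : ι → ℝ}
    (hw : ∀ i ∈ s, 0 ≤ w i) (hw_sum : 0 < ∑ i ∈ s, w i) (hx : ∀ i ∈ s, 0 < x i) :
    ∑ i ∈ s, w i * log (x i) ≤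
      (∑ i ∈ s, w i) * log ((∑ i ∈ s, w i * x i) / ∑ i ∈ s, w i) := by
  have h := strictConcaveOn_log_Ioi.concaveOn.le_map_centerMass hw hw_sum hx
  simp only [centerMass, smul_eq_mul, Function.comp_apply] at h
  rwa [inv_mul_eq_div, inv_mul_eq_div, div_le_iff₀' hw_sum] at h

theorem sum_mul_log_sum_div_le {A : Type*} [Fintype A] [Nonempty A] {g h : A → ℝ}
    (hg : ∀ a, 0 < g a) (hgh : ∀ a, g a ≤ h a) :
    ∑ a, g a * log ((∑ b, h b) / h a) ≤
      (∑ b, g b) * log ((∑ b, h b) / ∑ b, g b) + (∑ b, g b) * log (Fintype.card A) := by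
  have hh : ∀ a, 0 < h a := fun a => (hg a).trans_le (hgh a)
  have hg_sum : 0 < ∑ b, g b := sum_pos (fun a _ => hg a) univ_nonempty
  have hh_sum : 0 < ∑ b, h b := sum_pos (fun a _ => hh a) univ_nonempty
  have hmean : ∑ a, g a * ((∑ b, h b) / h a) ≤ (∑ b, h b) * Fintype.card A := by
    calc ∑ a, g a * ((∑ b, h b) / h a) ≤ ∑ _a : A, (∑ b, h b) := by
          refine sum_le_sum fun a _ => ?_
          rw [mul_div_left_comm]
          exact mul_le_of_le_one_right hh_sum.le ((div_le_one (hh a)).2 (hgh a))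
      _ = (∑ b, h b) * Fintype.card A := by rw [sum_const, nsmul_eq_mul, mul_comm, card_univ]
  calc ∑ a, g a * log ((∑ b, h b) / h a)
      ≤ (∑ b, g b) * log ((∑ a, g a * ((∑ b, h b) / h a)) / ∑ b, g b) :=
        sum_mul_log_le_mul_log_weightedMean _ (fun a _ => (hg a).le) hg_sum
          fun a _ => div_pos hh_sum (hh a)
    _ ≤ (∑ b, g b) * log ((∑ b, h b) * Fintype.card A / ∑ b, g b) := by
        gcongr
        exact div_pos (sum_pos (fun a _ => mul_pos (hg a) (div_pos hh_sum (hh a))) univ_nonempty)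
          hg_sum
    _ = (∑ b, g b) * log ((∑ b, h b) / ∑ b, g b) + (∑ b, g b) * log (Fintype.card A) := by
        rw [mul_div_right_comm, log_mul (div_pos hh_sum hg_sum).ne' (by positivity), mul_add]

theorem deleted_space_bound_general {I A : Type*} [Fintype I] [Fintype A]
    [Nonempty A]
    (f f' : A → I → ℝ) (hpos : ∀ a i, 0 < f' a i) (hle : ∀ a i, f' a i ≤ f a i) :
    ∑ i, ∑ a, f' a i * Real.log ((∑ b, f b i) / f a i) ≤
      (∑ i, (∑ b, f' b i) * Real.log ((∑ b, f b i) / (∑ b, f' b i))) +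
      (∑ i, ∑ b, f' b i) * Real.log (Fintype.card A) := by
  rw [sum_mul, ← sum_add_distrib]
  exact sum_le_sum fun i _ => sum_mul_log_sum_div_le (fun a => hpos a i) (fun a => hle a i)

/-- Space for the deleted symbols under k-th order entropy coding:
`∑_i ∑_a f'_{a,i}·ln(n_i/f_{a,i}) ≤ ∑_i n'_i·ln(n_i/n'_i) + (∑_i n'_i)·ln σ`. -/
theorem deleted_space_bound {I A : Type*} [Fintype I] [Fintype A]
    [Nonempty I] [Nonempty A]
    (f f' : A → I → ℝ) (hpos : ∀ a i, 0 < f' a i) (hle : ∀ a i, f' a i ≤ f a i) :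
    ∑ i, ∑ a, f' a i * Real.log ((∑ b, f b i) / f a i) ≤
      (∑ i, (∑ b, f' b i) * Real.log ((∑ b, f b i) / (∑ b, f' b i))) +
      (∑ i, ∑ b, f' b i) * Real.log (Fintype.card A) :=
  deleted_space_bound_general f f' hpos hle
end

section
/- Let I be a finite set and for each i ∈ I let n_i and n'_i be reals with 0 < n'_i ≤ n_i. Let K₁ ≥ K₂ ≥ e be real thresholds. Then Σ_{i∈I} n'_i·ln(n_i/n'_i) ≤ (ln K₁ / K₁)·Σ_{i∈I} n_i + (ln K₂ / K₂)·Σ_{i∈I} n_i + (ln K₂)·Σ_{i∈I} n'_i. -/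
/-!
Bound each summand separately according to the ratio `r = nᵢ / n'ᵢ`. Writing
`n'ᵢ · ln r = (ln r / r) · nᵢ` and using that `ln x / x` is antitone on `[e, ∞)`, a ratio
`r ≥ K₁` contributes at most `(ln K₁ / K₁) · nᵢ` and a ratio `K₂ ≤ r < K₁` at most
`(ln K₂ / K₂) · nᵢ`; a ratio `r < K₂` contributes at most `(ln K₂) · n'ᵢ`. All three
bounds are nonnegative, so their sum dominates every summand.
-/

open Real Finset

lemma mul_log_div_le_of_le_div {a b K : ℝ} (ha : 0 < a) (hK : exp 1 ≤ K) (hKr : K ≤ b / a) :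
    a * log (b / a) ≤ log K / K * b := by
  have hr : 0 < b / a := (exp_pos 1).trans_le (hK.trans hKr)
  have hb : 0 < b := (div_pos_iff_of_pos_right ha).mp hr
  have hlog : log (b / a) / (b / a) ≤ log K / K :=
    log_div_self_antitoneOn hK (hK.trans hKr) hKr
  calc a * log (b / a) = log (b / a) / (b / a) * b := by field_simp
    _ ≤ log K / K * b := by gcongr

lemma mul_log_div_le_of_div_le {a b K : ℝ} (ha : 0 < a) (hb : 0 < b) (hr : b / a ≤ K) :
    a * log (b / a) ≤ log K * a := by
  rw [mul_comm]
  gcongr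

lemma log_div_self_nonneg_of_exp_one_le {K : ℝ} (hK : exp 1 ≤ K) : 0 ≤ log K / K := by
  have hK1 : 1 ≤ K := (one_le_exp zero_le_one).trans hK
  exact div_nonneg (log_nonneg hK1) (zero_le_one.trans hK1)

lemma mul_log_div_le_of_thresholds {a b K₁ K₂ : ℝ} (ha : 0 < a) (hab : a ≤ b)
    (hK : K₂ ≤ K₁) (hK₂ : exp 1 ≤ K₂) :
    a * log (b / a) ≤ log K₁ / K₁ * b + log K₂ / K₂ * b + log K₂ * a := by
  have hb : 0 < b := ha.trans_le hab
  have h₁ : 0 ≤ log K₁ / K₁ * b :=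
    mul_nonneg (log_div_self_nonneg_of_exp_one_le (hK₂.trans hK)) hb.le
  have h₂ : 0 ≤ log K₂ / K₂ * b := mul_nonneg (log_div_self_nonneg_of_exp_one_le hK₂) hb.le
  have h₃ : 0 ≤ log K₂ * a :=
    mul_nonneg (log_nonneg ((one_le_exp zero_le_one).trans hK₂)) ha.le
  rcases le_or_gt K₁ (b / a) with hr | hr
  · linarith [mul_log_div_le_of_le_div ha (hK₂.trans hK) hr]
  rcases le_or_gt K₂ (b / a) with hr' | hr'
  · linarith [mul_log_div_le_of_le_div ha hK₂ hr']
  · linarith [mul_log_div_le_of_div_le ha hb hr'.le]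

/-- Three-way partition bound: for `0 < n'_i ≤ n_i` and thresholds `K₁ ≥ K₂ ≥ e`,
`∑ n'_i·ln(n_i/n'_i) ≤ (ln K₁/K₁)·∑ n_i + (ln K₂/K₂)·∑ n_i + (ln K₂)·∑ n'_i`. -/
theorem three_way_partition_bound {I : Type*} [Fintype I] (n n' : I → ℝ)
    (hpos : ∀ i, 0 < n' i) (hle : ∀ i, n' i ≤ n i)
    (K₁ K₂ : ℝ) (hK : K₂ ≤ K₁) (hK₂ : Real.exp 1 ≤ K₂) :
    ∑ i, n' i * Real.log (n i / n' i) ≤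
      (Real.log K₁ / K₁) * (∑ i, n i) + (Real.log K₂ / K₂) * (∑ i, n i) +
      Real.log K₂ * (∑ i, n' i) := by
  simp only [mul_sum, ← sum_add_distrib]
  exact sum_le_sum fun i _ => mul_log_div_le_of_thresholds (hpos i) (hle i) hK hK₂
end
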